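/- arXiv:1910.12280 — 3 statements merged into one kernel-verified Lean document; each statement's English description precedes it below -/
import Mathlib

section
/- Let R be a principal ideal domain, S = R[x_1,…,x_n], and F = S^r with standard basis e_1,…,e_r. For l = 1,…,m let f_l = c_l·x^{u_l}·e_{k_l} with c_l ∈ R nonzero, u_l ∈ ℕ^n, k_l ∈ {1,…,r}. Let φ : S^m → F be the S-linear map sending the standard basis vector g_l to f_l. Then the kernel of φ is generated by the elements r_{ij} = (l_{ij}/c_i)·x^{sup(u_i,u_j)−u_i}·g_i − (l_{ij}/c_j)·x^{sup(u_i,u_j)−u_j}·g_j, taken over all pairs 1 ≤ i < j ≤ m with k_i = k_j, where l_{ij} is a least common multiple of c_i and c_j and sup(u_i,u_j) is the componentwise maximum in ℕ^n. -/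
/-!
Give `g_t` the degree `(k_t, u_t)`: a coordinate of `F` and a monomial. The map `g_t ↦ f_t` is
homogeneous, so its kernel is spanned by homogeneous syzygies, and a syzygy of degree `(k, v)` is
`∑ λ_t x^(v - u_t) g_t` over the `t` with `k_t = k`, `u_t ≤ v`, where `∑ λ_t c_t = 0` in `R`.
It remains to see that these syzygies `λ` of the coefficients are spanned by the lcm relations
`(l_ts / c_t) e_t - (l_ts / c_s) e_s`. By induction on the largest index `s`: `c_s λ_s` lies in
`(c_t : t < s) ⊓ (c_s)`, which equals `⨆ t, (c_t) ⊓ (c_s) = ⨆ t, (l_ts)` because the lattice of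
ideals of a principal ideal ring is distributive, so `λ_s` is an `R`-combination of the
`l_ts / c_s` and lcm relations clear the `s`-th entry.
-/

open MvPolynomial
open scoped MonomialOrder

namespace PaperGB

variable {n : ℕ} {R : Type*} [CommSemiring R]

/-- The degree (leading exponent) of a multivariate polynomial w.r.t. a monomial order. -/
noncomputable def mDeg (m : MonomialOrder (Fin n)) (f : MvPolynomial (Fin n) R) :
    Fin n →₀ ℕ :=
  m.toSyn.symm (f.support.sup fun d => m.toSyn d)

/-- The leading coefficient. -/
noncomputable def mLC (m : MonomialOrder (Fin n)) (f : MvPolynomial (Fin n) R) : R :=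
  f.coeff (mDeg m f)

/-- The leading term. -/
noncomputable def mLT (m : MonomialOrder (Fin n)) (f : MvPolynomial (Fin n) R) :
    MvPolynomial (Fin n) R :=
  monomial (mDeg m f) (mLC m f)

variable {R : Type*} [CommRing R]

/-- The leading term ideal. -/
noncomputable def mLTIdeal (m : MonomialOrder (Fin n)) (I : Ideal (MvPolynomial (Fin n) R)) :
    Ideal (MvPolynomial (Fin n) R) :=
  Ideal.span ((fun g => mLT m g) '' {g | g ∈ I ∧ g ≠ 0})

/-- `f` is a Gröbner basis of `I`. -/
def IsGroebnerBasis (m : MonomialOrder (Fin n)) (I : Ideal (MvPolynomial (Fin n) R))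
    {k : ℕ} (f : Fin k → MvPolynomial (Fin n) R) : Prop :=
  (∀ i, f i ≠ 0) ∧ (∀ i, f i ∈ I) ∧
    Ideal.span (Set.range fun i => mLT m (f i)) = mLTIdeal m I

/-- `g` reduces to zero modulo the family `f`. -/
def ReducesToZero (m : MonomialOrder (Fin n)) {k : ℕ} (f : Fin k → MvPolynomial (Fin n) R)
    (g : MvPolynomial (Fin n) R) : Prop :=
  ∃ p : Fin k → MvPolynomial (Fin n) R,
    g = ∑ i, p i * f i ∧
    ∀ i, p i * f i ≠ 0 → mDeg m (p i) + mDeg m (f i) ≼[m] mDeg m g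

/-- A weakly regular sequence. -/
def IsWeakRegularSeq {k : ℕ} (s : Fin k → R) : Prop :=
  ∀ i : Fin k, ∀ x : R,
    s i * x ∈ Ideal.span (s '' {j | j < i}) → x ∈ Ideal.span (s '' {j | j < i})

/-- A permutable weak regular sequence of non-units. -/
def IsPermutableWeakRegularSeq {k : ℕ} (s : Fin k → R) : Prop :=
  (∀ i, ¬ IsUnit (s i)) ∧ ∀ σ : Equiv.Perm (Fin k), IsWeakRegularSeq (s ∘ σ)

/-- `M` has a free resolution `0 → F_p → ⋯ → F_0 → M → 0` by finitely generated
free `S`-modules. -/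
def HasFiniteFreeResolutionOfLength (S : Type*) [CommRing S] (M : Type*) [AddCommGroup M]
    [Module S M] (p : ℕ) : Prop :=
  ∃ (d : ℕ → ℕ) (g : ∀ i : ℕ, (Fin (d (i + 1)) → S) →ₗ[S] (Fin (d i) → S))
    (ε : (Fin (d 0) → S) →ₗ[S] M),
    (∀ i, p < i → d i = 0) ∧
    Function.Surjective ε ∧
    LinearMap.range (g 0) = LinearMap.ker ε ∧
    ∀ i, LinearMap.range (g (i + 1)) = LinearMap.ker (g i)

/-- `M` has an infinite free resolution `⋯ → F_p → F_p → F_p → F_{p-1} → ⋯ → F_0 → M → 0`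
by finitely generated free `S`-modules, whose modules are constant from stage `p` on. -/
def HasEventuallyConstantFreeResolution (S : Type*) [CommRing S] (M : Type*) [AddCommGroup M]
    [Module S M] (p : ℕ) : Prop :=
  ∃ (d : ℕ → ℕ) (g : ∀ i : ℕ, (Fin (d (i + 1)) → S) →ₗ[S] (Fin (d i) → S))
    (ε : (Fin (d 0) → S) →ₗ[S] M),
    (∀ i, p ≤ i → d i = d p) ∧
    Function.Surjective ε ∧
    LinearMap.range (g 0) = LinearMap.ker ε ∧
    ∀ i, LinearMap.range (g (i + 1)) = LinearMap.ker (g i)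

end PaperGB

open PaperGB

/-- `l` is a least common multiple of `a` and `b`, with cofactors `qa`, `qb`. -/
def IsLcmChoice {R : Type*} [CommRing R] (a b l qa qb : R) : Prop :=
  l = a * qa ∧ l = b * qb ∧ ∀ c, a ∣ c → b ∣ c → l ∣ c

/-- The `S_R`-polynomial of `f i` and `f j`, built from cofactor data `u i j`, `v i j`
(so that `lcm (lc (f i)) (lc (f j)) = lc (f i) * u i j = lc (f j) * v i j`). -/
noncomputable def sPolyPID {n : ℕ} {R : Type*} [CommRing R] (m : MonomialOrder (Fin n))
    {M : ℕ} (f : Fin M → MvPolynomial (Fin n) R) (u v : Fin M → Fin M → R) (i j : Fin M) :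
    MvPolynomial (Fin n) R :=
  MvPolynomial.monomial ((mDeg m (f i) ⊔ mDeg m (f j)) - mDeg m (f i)) (u i j) * f i
  - MvPolynomial.monomial ((mDeg m (f i) ⊔ mDeg m (f j)) - mDeg m (f j)) (v i j) * f j

open Matrix Submodule

namespace Ideal

variable {R : Type*} [CommRing R] [IsPrincipalIdealRing R]

theorem inf_sup_right_le_of_isPrincipalIdealRing (I J K : Ideal R) :
    (I ⊔ J) ⊓ K ≤ I ⊓ K ⊔ J ⊓ K := by
  obtain ⟨g, hg⟩ := IsPrincipalIdealRing.principal (I ⊔ J)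
  obtain ⟨ℓ, hℓ⟩ := IsPrincipalIdealRing.principal ((I ⊔ J) ⊓ K)
  rw [submodule_span_eq] at hg hℓ
  have hℓ_mem : ℓ ∈ (I ⊔ J) ⊓ K := hℓ ▸ mem_span_singleton_self ℓ
  obtain ⟨e, rfl⟩ := mem_span_singleton'.mp (hg ▸ hℓ_mem.1)
  -- `p ∈ I ⊔ J = (g)` makes `p * e` a multiple of the generator `e * g` of `(I ⊔ J) ⊓ K`
  have hK : ∀ p ∈ I ⊔ J, p * e ∈ K := fun p hp => by
    obtain ⟨s, rfl⟩ := mem_span_singleton'.mp (hg ▸ hp)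
    convert K.mul_mem_left s hℓ_mem.2 using 1
    ring
  intro x hx
  obtain ⟨t, rfl⟩ := mem_span_singleton'.mp (hℓ ▸ hx)
  obtain ⟨p, hp, q, hq, hpq⟩ := Submodule.mem_sup.mp (hg ▸ mem_span_singleton_self g)
  rw [show t * (e * g) = p * e * t + q * e * t by rw [← hpq]; ring]
  exact Submodule.add_mem_sup
    ⟨I.mul_mem_right _ (I.mul_mem_right _ hp), K.mul_mem_right _ (hK p (mem_sup_left hp))⟩
    ⟨J.mul_mem_right _ (J.mul_mem_right _ hq), K.mul_mem_right _ (hK q (mem_sup_right hq))⟩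

theorem span_image_inf_le_span_image {ι : Type*} [DecidableEq ι] (T : Finset ι) {c g : ι → R}
    {K : Ideal R} (h : ∀ t ∈ T, span {c t} ⊓ K = span {g t}) :
    span (c '' T) ⊓ K ≤ span (g '' T) := by
  induction T using Finset.induction_on with
  | empty => simp
  | insert s T _ ih =>
    simp only [Finset.coe_insert, Set.image_insert_eq, span_insert] at h ⊢
    refine (inf_sup_right_le_of_isPrincipalIdealRing _ _ _).trans (sup_le_sup ?_ ?_)
    · exact (h s (Finset.mem_insert_self s T)).le
    · exact ih fun t ht => h t (Finset.mem_insert_of_mem ht)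

end Ideal

theorem IsLcmChoice.span_singleton_inf {R : Type*} [CommRing R] {a b l qa qb : R}
    (h : IsLcmChoice a b l qa qb) : Ideal.span {a} ⊓ Ideal.span {b} = Ideal.span {l} := by
  obtain ⟨hla, hlb, hl⟩ := h
  ext x
  simp only [Submodule.mem_inf, Ideal.mem_span_singleton]
  exact ⟨fun ⟨ha, hb⟩ => hl x ha hb, fun hx =>
    ⟨(Dvd.intro qa hla.symm).trans hx, (Dvd.intro qb hlb.symm).trans hx⟩⟩

section TermSyzygy

variable {R σ ι κ : Type*} [CommRing R]

def lcmSyzygy [DecidableEq ι] (a b : ι → ι → R) (i j : ι) : ι → R :=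
  Pi.single i (a i j) - Pi.single j (b i j)

theorem lcmSyzygy_dotProduct_eq_zero [Fintype ι] [DecidableEq ι] {c : ι → R}
    {l a b : ι → ι → R} {i j : ι} (h : IsLcmChoice (c i) (c j) (l i j) (a i j) (b i j)) :
    lcmSyzygy a b i j ⬝ᵥ c = 0 := by
  rw [lcmSyzygy, sub_dotProduct, single_dotProduct, single_dotProduct, sub_eq_zero,
    mul_comm, ← h.1, h.2.1, mul_comm]

theorem mem_span_lcmSyzygy_of_dotProduct_eq_zero [IsDomain R] [IsPrincipalIdealRing R]
    [Fintype ι] [LinearOrder ι] {c : ι → R} (hc : ∀ i, c i ≠ 0) {l a b : ι → ι → R}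
    (hlcm : ∀ i j, i < j → IsLcmChoice (c i) (c j) (l i j) (a i j) (b i j))
    (T : Finset ι) {x : ι → R} (hxT : ∀ t ∉ T, x t = 0) (hx : x ⬝ᵥ c = 0) :
    x ∈ span R {y | ∃ i ∈ T, ∃ j ∈ T, i < j ∧ y = lcmSyzygy a b i j} := by
  induction T using Finset.induction_on_max generalizing x with
  | empty =>
    obtain rfl : x = 0 := funext fun t => hxT t (Finset.notMem_empty t)
    exact zero_mem _
  | insert s T hlt ih =>
    have hsT : s ∉ T := fun hs => lt_irrefl s (hlt s hs)
    have hsum : x s * c s + ∑ t ∈ T, x t * c t = 0 := by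
      rw [← Finset.sum_insert hsT (f := fun t => x t * c t), ← hx, dotProduct,
        Finset.sum_subset (Finset.subset_univ _) fun t _ ht => by rw [hxT t ht, zero_mul]]
    have hmem : c s * x s ∈ Ideal.span ((fun t => l t s) '' T) := by
      refine Ideal.span_image_inf_le_span_image T
        (fun t ht => (hlcm t s (hlt t ht)).span_singleton_inf) ⟨?_, ?_⟩
      · rw [show c s * x s = -∑ t ∈ T, x t * c t by linear_combination hsum]
        exact neg_mem (sum_mem fun t ht =>
          Ideal.mul_mem_left _ _ (Ideal.subset_span ⟨t, ht, rfl⟩))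
      · exact Ideal.mem_span_singleton'.mpr ⟨x s, mul_comm _ _⟩
    obtain ⟨ν, hν⟩ := (mem_span_image_finset_iff_exists_fun' R).mp hmem
    have hxs : x s = ∑ t ∈ T, ν t * b t s := by
      refine mul_left_cancel₀ (hc s) ?_
      rw [← hν, Finset.mul_sum]
      exact Finset.sum_congr rfl fun t ht => by
        rw [(hlcm t s (hlt t ht)).2.1, smul_eq_mul]; ring
    -- adding these lcm relations to `x` clears its `s`-th entry
    set y := x + ∑ t ∈ T, ν t • lcmSyzygy a b t s
    have hyT : ∀ t ∉ T, y t = 0 := by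
      intro t ht
      by_cases hts : t = s
      · have hcol : ∀ r ∈ T, (ν r • lcmSyzygy a b r s) s = -(ν r * b r s) := fun r hr => by
          simp [lcmSyzygy, (hlt r hr).ne']
        simp only [hts, y, Pi.add_apply, Finset.sum_apply]
        rw [Finset.sum_congr rfl hcol, Finset.sum_neg_distrib, hxs, add_neg_cancel]
      · simp [y, lcmSyzygy, Pi.single_apply, hts, hxT t (by simp [hts, ht]), ht]
    have hy : y ⬝ᵥ c = 0 := by
      rw [add_dotProduct, sum_dotProduct, hx, zero_add]
      exact Finset.sum_eq_zero fun t ht => by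
        rw [smul_dotProduct, lcmSyzygy_dotProduct_eq_zero (hlcm t s (hlt t ht)), smul_zero]
    have hspan : span R {y | ∃ i ∈ T, ∃ j ∈ T, i < j ∧ y = lcmSyzygy a b i j} ≤
        span R {y | ∃ i ∈ insert s T, ∃ j ∈ insert s T, i < j ∧ y = lcmSyzygy a b i j} :=
      span_mono fun y ⟨i, hi, j, hj, hij, hy⟩ =>
        ⟨i, Finset.mem_insert_of_mem hi, j, Finset.mem_insert_of_mem hj, hij, hy⟩
    rw [show x = y - ∑ t ∈ T, ν t • lcmSyzygy a b t s by simp [y]]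
    refine sub_mem (hspan (ih hyT hy)) (sum_mem fun t ht => smul_mem _ _ (subset_span ?_))
    exact ⟨t, Finset.mem_insert_of_mem ht, s, Finset.mem_insert_self s T, hlt t ht, rfl⟩

/-- With `g_t` of degree `u t`, the element of degree `v` with coefficient vector `x`. The
truncated subtraction `v - u t` makes this meaningless at entries with `u t ≰ v`. -/
noncomputable def homogOfCoeffs (u : ι → σ →₀ ℕ) (v : σ →₀ ℕ) :
    (ι → R) →ₗ[R] ι → MvPolynomial σ R :=
  LinearMap.pi fun t => monomial (v - u t) ∘ₗ LinearMap.proj t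

theorem homogOfCoeffs_apply (u : ι → σ →₀ ℕ) (v : σ →₀ ℕ) (x : ι → R) (t : ι) :
    homogOfCoeffs u v x t = monomial (v - u t) (x t) :=
  rfl

theorem homogOfCoeffs_single [DecidableEq ι] (u : ι → σ →₀ ℕ) (v : σ →₀ ℕ) (i : ι) (x : R) :
    homogOfCoeffs u v (Pi.single i x) = Pi.single i (monomial (v - u i) x) := by
  funext t
  by_cases hti : t = i
  · subst hti; simp [homogOfCoeffs_apply]
  · simp [homogOfCoeffs_apply, hti]

noncomputable def termSyzygy [DecidableEq ι] (u : ι → σ →₀ ℕ) (a b : ι → ι → R) (i j : ι) :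
    ι → MvPolynomial σ R :=
  Pi.single i (monomial (u i ⊔ u j - u i) (a i j)) -
    Pi.single j (monomial (u i ⊔ u j - u j) (b i j))

theorem homogOfCoeffs_lcmSyzygy [DecidableEq ι] (u : ι → σ →₀ ℕ) (a b : ι → ι → R) {i j : ι}
    {v : σ →₀ ℕ} (hv : u i ⊔ u j ≤ v) :
    homogOfCoeffs u v (lcmSyzygy a b i j) =
      monomial (v - (u i ⊔ u j)) (1 : R) • termSyzygy u a b i j := by
  rw [lcmSyzygy, termSyzygy, map_sub, homogOfCoeffs_single, homogOfCoeffs_single, smul_sub,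
    ← Pi.single_smul', ← Pi.single_smul', smul_eq_mul, smul_eq_mul, monomial_mul, monomial_mul,
    one_mul, one_mul, tsub_add_tsub_cancel hv le_sup_left, tsub_add_tsub_cancel hv le_sup_right]

theorem homogOfCoeffs_mem_span_termSyzygy [IsDomain R] [IsPrincipalIdealRing R] [Fintype ι]
    [LinearOrder ι] {c : ι → R} (hc : ∀ i, c i ≠ 0) {u : ι → σ →₀ ℕ} {kk : ι → κ}
    {l a b : ι → ι → R} (hlcm : ∀ i j, i < j → IsLcmChoice (c i) (c j) (l i j) (a i j) (b i j))
    {k : κ} {v : σ →₀ ℕ} {x : ι → R} (hx : ∀ t, ¬(kk t = k ∧ u t ≤ v) → x t = 0)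
    (hxc : x ⬝ᵥ c = 0) :
    homogOfCoeffs u v x ∈
      span (MvPolynomial σ R) {y | ∃ i j, i < j ∧ kk i = kk j ∧ y = termSyzygy u a b i j} := by
  classical
  set T := Finset.univ.filter fun t => kk t = k ∧ u t ≤ v
  have hmap := mem_map_of_mem (f := homogOfCoeffs u v)
    (mem_span_lcmSyzygy_of_dotProduct_eq_zero hc hlcm T
      (fun t ht => hx t fun h => ht (Finset.mem_filter.mpr ⟨Finset.mem_univ t, h⟩)) hxc)
  rw [map_span] at hmap
  refine (span_le.mpr ?_ : span R _ ≤ (span (MvPolynomial σ R) _).restrictScalars R) hmap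
  rintro _ ⟨_, ⟨i, hi, j, hj, hij, rfl⟩, rfl⟩
  obtain ⟨hki, hui⟩ := (Finset.mem_filter.mp hi).2
  obtain ⟨hkj, huj⟩ := (Finset.mem_filter.mp hj).2
  rw [SetLike.mem_coe, homogOfCoeffs_lcmSyzygy u a b (sup_le hui huj)]
  refine smul_mem _ _ (subset_span ?_)
  exact ⟨i, j, hij, hki.trans hkj.symm, rfl⟩

open Classical in
noncomputable def homogCoeffs (u : ι → σ →₀ ℕ) (kk : ι → κ) (k : κ) (v : σ →₀ ℕ)
    (w : ι → MvPolynomial σ R) : ι → R :=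
  fun t => if kk t = k ∧ u t ≤ v then coeff (v - u t) (w t) else 0

theorem homogCoeffs_apply_of_not {u : ι → σ →₀ ℕ} {kk : ι → κ} {k : κ} {v : σ →₀ ℕ}
    {w : ι → MvPolynomial σ R} {t : ι} (h : ¬(kk t = k ∧ u t ≤ v)) :
    homogCoeffs u kk k v w t = 0 :=
  if_neg h

theorem coeff_linearCombination_single_monomial [Fintype ι] [DecidableEq κ] (c : ι → R)
    (u : ι → σ →₀ ℕ) (kk : ι → κ) (w : ι → MvPolynomial σ R) (k : κ) (v : σ →₀ ℕ) :
    coeff v (Fintype.linearCombination (MvPolynomial σ R)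
      (fun t => (Pi.single (kk t) (monomial (u t) (c t)) : κ → MvPolynomial σ R)) w k) =
        homogCoeffs u kk k v w ⬝ᵥ c := by
  classical
  simp only [Fintype.linearCombination_apply, Finset.sum_apply, Pi.smul_apply, coeff_sum,
    dotProduct, homogCoeffs]
  refine Finset.sum_congr rfl fun t _ => ?_
  by_cases hk : kk t = k
  · subst hk
    simp [coeff_mul_monomial']
  · simp [hk]

theorem exists_finset_sum_homogOfCoeffs_eq [Fintype ι] [Fintype κ] (u : ι → σ →₀ ℕ)
    (kk : ι → κ) (w : ι → MvPolynomial σ R) :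
    ∃ V : Finset (σ →₀ ℕ), ∑ k, ∑ v ∈ V, homogOfCoeffs u v (homogCoeffs u kk k v w) = w := by
  classical
  set V := Finset.univ.biUnion fun t => (w t).support.image (· + u t)
  refine ⟨V, funext fun t => ?_⟩
  ext d
  have hterm : ∀ k v, coeff d (homogOfCoeffs u v (homogCoeffs u kk k v w) t) =
      if d + u t = v then if kk t = k then coeff d (w t) else 0 else 0 := by
    intro k v
    by_cases hv : d + u t = v
    · subst hv
      simp [homogOfCoeffs_apply, homogCoeffs, coeff_monomial]
    · have : ¬(v - u t = d ∧ u t ≤ v) := fun ⟨h1, h2⟩ =>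
        hv (by rw [← h1, tsub_add_cancel_of_le h2])
      simp [homogOfCoeffs_apply, homogCoeffs, coeff_monomial, hv]
      tauto
  simp only [Finset.sum_apply, coeff_sum, hterm, Finset.sum_ite_eq]
  by_cases hd : d ∈ (w t).support
  · have : d + u t ∈ V :=
      Finset.mem_biUnion.mpr ⟨t, Finset.mem_univ t, Finset.mem_image_of_mem _ hd⟩
    simp [this]
  · simp [notMem_support_iff.mp hd]

theorem linearCombination_termSyzygy [Fintype ι] [DecidableEq ι] [DecidableEq κ] {c : ι → R}
    {u : ι → σ →₀ ℕ} {kk : ι → κ} {l a b : ι → ι → R} {i j : ι} (hk : kk i = kk j)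
    (h : IsLcmChoice (c i) (c j) (l i j) (a i j) (b i j)) :
    Fintype.linearCombination (MvPolynomial σ R)
      (fun t => (Pi.single (kk t) (monomial (u t) (c t)) : κ → MvPolynomial σ R))
      (termSyzygy u a b i j) = 0 := by
  rw [termSyzygy, map_sub, Fintype.linearCombination_apply_single,
    Fintype.linearCombination_apply_single, hk, ← Pi.single_smul', ← Pi.single_smul',
    ← Pi.single_sub, smul_eq_mul, smul_eq_mul, monomial_mul, monomial_mul,
    tsub_add_cancel_of_le le_sup_left, tsub_add_cancel_of_le le_sup_right, mul_comm, ← h.1,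
    mul_comm, ← h.2.1, sub_self, Pi.single_zero]

theorem ker_linearCombination_eq_span_termSyzygy [IsDomain R] [IsPrincipalIdealRing R]
    [Fintype ι] [LinearOrder ι] [Fintype κ] [DecidableEq κ] {c : ι → R} (hc : ∀ i, c i ≠ 0)
    (u : ι → σ →₀ ℕ) (kk : ι → κ) {l a b : ι → ι → R}
    (hlcm : ∀ i j, i < j → IsLcmChoice (c i) (c j) (l i j) (a i j) (b i j)) :
    LinearMap.ker (Fintype.linearCombination (MvPolynomial σ R)
      (fun t => (Pi.single (kk t) (monomial (u t) (c t)) : κ → MvPolynomial σ R))) =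
      span (MvPolynomial σ R) {y | ∃ i j, i < j ∧ kk i = kk j ∧ y = termSyzygy u a b i j} := by
  refine le_antisymm (fun w hw => ?_) (span_le.mpr ?_)
  · obtain ⟨V, hV⟩ := exists_finset_sum_homogOfCoeffs_eq u kk w
    rw [← hV]
    refine sum_mem fun k _ => sum_mem fun v _ =>
      homogOfCoeffs_mem_span_termSyzygy hc hlcm (fun t => homogCoeffs_apply_of_not) ?_
    rw [← coeff_linearCombination_single_monomial, LinearMap.mem_ker.mp hw, Pi.zero_apply,
      coeff_zero]
  · rintro _ ⟨i, j, hij, hk, rfl⟩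
    exact linearCombination_termSyzygy hk (hlcm i j hij)

end TermSyzygy

/-- over a PID, syzygies of terms `c_l x^{u_l} e_{k_l}` in `F = S^r`
are generated by the relations `r_{ij}`. -/
theorem syzygies_of_terms_PID
    {n : ℕ} {R : Type*} [CommRing R] [IsDomain R] [IsPrincipalIdealRing R]
    {r M : ℕ} (c : Fin M → R) (hc : ∀ i, c i ≠ 0)
    (u : Fin M → (Fin n →₀ ℕ)) (kk : Fin M → Fin r)
    (f : Fin M → (Fin r → MvPolynomial (Fin n) R))
    (hf : ∀ t, f t = Pi.single (kk t) (MvPolynomial.monomial (u t) (c t)))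
    (l a b : Fin M → Fin M → R)
    (hlcm : ∀ i j : Fin M, i < j → IsLcmChoice (c i) (c j) (l i j) (a i j) (b i j))
    (rr : Fin M → Fin M → (Fin M → MvPolynomial (Fin n) R))
    (hrr : ∀ i j : Fin M, rr i j =
      Pi.single i (MvPolynomial.monomial ((u i ⊔ u j) - u i) (a i j))
      - Pi.single j (MvPolynomial.monomial ((u i ⊔ u j) - u j) (b i j)))
    (w : Fin M → MvPolynomial (Fin n) R) :
    (∑ t, w t • f t = 0) ↔
      w ∈ Submodule.span (MvPolynomial (Fin n) R)
        {h | ∃ i j : Fin M, i < j ∧ kk i = kk j ∧ h = rr i j} := by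
  obtain rfl : f = _ := funext hf
  obtain rfl : rr = termSyzygy u a b := funext₂ hrr
  rw [← ker_linearCombination_eq_span_termSyzygy hc u kk hlcm, LinearMap.mem_ker,
    Fintype.linearCombination_apply]
end

section
/- Let R be a principal ideal domain and N ∈ R a nonzero non-unit with factorization N = p_1^{n_1}⋯p_k^{n_k} into pairwise non-associate irreducible elements. Then every element of R/NR can be written in the form (u·p_1^{α_1}⋯p_k^{α_k}) + NR where u + NR is a unit of R/NR and 0 ≤ α_i ≤ n_i for each i; moreover this representation is unique in the sense that if (u·p_1^{α_1}⋯p_k^{α_k}) + NR = (v·p_1^{β_1}⋯p_k^{β_k}) + NR with u + NR, v + NR units and 0 ≤ α_i, β_i ≤ n_i, then α_i = β_i for all i. -/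
open MvPolynomial
open scoped MonomialOrder

open PaperGB

/-! Write `y = d * c` with `d = ∏ pᵢ ^ αᵢ`, where `αᵢ ≤ nᵢ` is maximal with `pᵢ ^ αᵢ ∣ y`, and
`N = m * d`. A prime `pᵢ` dividing `m` has `αᵢ < nᵢ`, so it does not divide `c`; hence adding to `c`
the multiple of `m` by the product of the `pᵢ` not dividing `c` gives a `u` divisible by no `pᵢ`,
i.e. a unit modulo `N`, with `u * d ≡ y`. For uniqueness, `∏ pᵢ ^ βᵢ` divides `N`, so divisibility
by it descends from `R ⧸ (N)` to `R`; multiplying by units gives divisibility in both directions,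
and divisibility of products of powers of pairwise non-associated primes compares exponents. -/

open Finset

section CancelMonoid

variable {M : Type*} [CommMonoidWithZero M] [IsCancelMulZero M]
  {ι : Type*} [Fintype ι] {p : ι → M}

theorem pow_dvd_prod_pow_iff (hp : ∀ i, Prime (p i)) (hp' : Pairwise fun i j => ¬ p i ∣ p j)
    (f : ι → ℕ) (i : ι) (e : ℕ) : p i ^ e ∣ ∏ j, p j ^ f j ↔ e ≤ f i := by
  classical
  rw [← mul_prod_erase univ _ (mem_univ i)]
  refine ⟨fun h => ?_, fun h => (pow_dvd_pow _ h).mul_right _⟩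
  have hrest : ¬ p i ∣ ∏ j ∈ univ.erase i, p j ^ f j := fun hd => by
    obtain ⟨j, hj, hdj⟩ := ((hp i).dvd_finsetProd_iff _).mp hd
    exact hp' (ne_of_mem_erase hj).symm ((hp i).dvd_of_dvd_pow hdj)
  exact (pow_dvd_pow_iff (hp i).ne_zero (hp i).not_isUnit).mp
    ((hp i).pow_dvd_of_dvd_mul_right e hrest h)

theorem prod_pow_dvd_prod_pow_iff (hp : ∀ i, Prime (p i))
    (hp' : Pairwise fun i j => ¬ p i ∣ p j) (e f : ι → ℕ) :
    ∏ i, p i ^ e i ∣ ∏ i, p i ^ f i ↔ e ≤ f :=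
  ⟨fun h i => (pow_dvd_prod_pow_iff hp hp' f i (e i)).mp
      ((dvd_prod_of_mem (fun j => p j ^ e j) (mem_univ i)).trans h),
    fun h => prod_dvd_prod_of_dvd _ _ fun i _ => pow_dvd_pow _ (h i)⟩

end CancelMonoid

section Ring

variable {R : Type*} [CommRing R]

theorem dvd_of_mk_dvd_mk {N a b : R} (hb : b ∣ N)
    (h : Ideal.Quotient.mk (Ideal.span {N}) b ∣ Ideal.Quotient.mk (Ideal.span {N}) a) :
    b ∣ a := by
  obtain ⟨c, hc⟩ := h
  obtain ⟨c, rfl⟩ := Ideal.Quotient.mk_surjective c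
  rw [← map_mul, Ideal.Quotient.eq, Ideal.mem_span_singleton] at hc
  simpa using dvd_add (hb.trans hc) (dvd_mul_right b c)

theorem isUnit_mk_of_isCoprime {N u : R} (h : IsCoprime u N) :
    IsUnit (Ideal.Quotient.mk (Ideal.span {N}) u) := by
  obtain ⟨a, b, hab⟩ := h
  refine IsUnit.of_mul_eq_one (Ideal.Quotient.mk _ a) ?_
  rw [← map_mul, ← map_one (Ideal.Quotient.mk _), Ideal.Quotient.eq, Ideal.mem_span_singleton]
  exact ⟨-b, by linear_combination hab⟩

variable {ι : Type*} [Fintype ι] {p : ι → R}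

theorem exists_forall_not_dvd_add_mul (hp : ∀ i, Prime (p i))
    (hp' : Pairwise fun i j => ¬ p i ∣ p j) {c m : R} (h : ∀ i, p i ∣ m → ¬ p i ∣ c) :
    ∃ t, ∀ i, ¬ p i ∣ c + m * t := by
  classical
  refine ⟨∏ j ∈ univ.filter (fun j => ¬ p j ∣ c), p j, fun i => ?_⟩
  by_cases hc : p i ∣ c
  · have ht : ¬ p i ∣ ∏ j ∈ univ.filter (fun j => ¬ p j ∣ c), p j := fun hd => by
      obtain ⟨j, hj, hij⟩ := ((hp i).dvd_finsetProd_iff _).mp hd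
      exact hp' (fun hji : i = j => (mem_filter.mp hj).2 (hji ▸ hc)) hij
    rw [dvd_add_right hc]
    exact fun hd => ((hp i).dvd_or_dvd hd).elim (fun hm => h i hm hc) ht
  · rw [dvd_add_left (dvd_mul_of_dvd_right (dvd_prod_of_mem _ (by simpa using hc)) m)]
    exact hc

end Ring

section PID

variable {R : Type*} [CommRing R] [IsDomain R] [IsPrincipalIdealRing R]
  {ι : Type*} [Fintype ι] {p : ι → R}

theorem exists_eq_prod_pow_mul (hp : ∀ i, Prime (p i)) (hp' : Pairwise fun i j => ¬ p i ∣ p j)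
    (n : ι → ℕ) (y : R) :
    ∃ α ≤ n, ∃ c, y = (∏ i, p i ^ α i) * c ∧ ∀ i, α i < n i → ¬ p i ∣ c := by
  classical
  let α i := Nat.findGreatest (fun a => p i ^ a ∣ y) (n i)
  have hα : ∀ i, p i ^ α i ∣ y := fun i =>
    Nat.findGreatest_spec (P := fun a => p i ^ a ∣ y) (Nat.zero_le _) (by simp)
  have hcop : Pairwise (Function.onFun IsCoprime fun i => p i ^ α i) := fun i j hij =>
    ((hp i).coprime_iff_not_dvd.mpr fun h : p i ∣ p j => hp' hij h).pow
  obtain ⟨c, hc⟩ := Fintype.prod_dvd_of_coprime hcop hα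
  refine ⟨α, fun i => Nat.findGreatest_le _, c, hc, fun i hi hpc =>
    Nat.findGreatest_is_greatest (Nat.lt_succ_self _) hi ?_⟩
  rw [pow_succ]
  exact (mul_dvd_mul (dvd_prod_of_mem (fun j => p j ^ α j) (mem_univ i)) hpc).trans hc.symm.dvd

theorem exists_isUnit_mk_mul_prod_pow (hp : ∀ i, Prime (p i))
    (hp' : Pairwise fun i j => ¬ p i ∣ p j) (n : ι → ℕ) (y : R) :
    ∃ (u : R) (α : ι → ℕ), IsUnit (Ideal.Quotient.mk (Ideal.span {∏ i, p i ^ n i}) u) ∧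
      α ≤ n ∧ Ideal.Quotient.mk (Ideal.span {∏ i, p i ^ n i}) y =
        Ideal.Quotient.mk _ (u * ∏ i, p i ^ α i) := by
  obtain ⟨α, hαn, c, rfl, hc⟩ := exists_eq_prod_pow_mul hp hp' n y
  set m := ∏ i, p i ^ (n i - α i)
  have hm : ∀ i, p i ∣ m → ¬ p i ∣ c := fun i hpm =>
    hc i (by have := (pow_dvd_prod_pow_iff hp hp' _ i 1).mp (by simpa using hpm); omega)
  obtain ⟨t, ht⟩ := exists_forall_not_dvd_add_mul hp hp' hm
  have hmd : m * ∏ i, p i ^ α i = ∏ i, p i ^ n i := by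
    rw [← prod_mul_distrib]
    exact prod_congr rfl fun i _ => by rw [← pow_add, Nat.sub_add_cancel (hαn i)]
  refine ⟨c + m * t, α, isUnit_mk_of_isCoprime ?_, hαn, ?_⟩
  · exact IsCoprime.prod_right fun i _ => ((hp i).coprime_iff_not_dvd.mpr (ht i)).symm.pow_right
  · rw [Ideal.Quotient.eq, Ideal.mem_span_singleton, ← hmd]
    exact ⟨-t, by ring⟩

end PID

theorem le_of_mk_mul_prod_pow_eq {R : Type*} [CommRing R] [IsDomain R] {ι : Type*} [Fintype ι]
    {p : ι → R} (hp : ∀ i, Prime (p i)) (hp' : Pairwise fun i j => ¬ p i ∣ p j)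
    {n α β : ι → ℕ} {u v : R} (hu : IsUnit (Ideal.Quotient.mk (Ideal.span {∏ i, p i ^ n i}) u))
    (hβ : β ≤ n) (h : Ideal.Quotient.mk (Ideal.span {∏ i, p i ^ n i}) (u * ∏ i, p i ^ α i) =
      Ideal.Quotient.mk _ (v * ∏ i, p i ^ β i)) : β ≤ α := by
  rw [← prod_pow_dvd_prod_pow_iff hp hp']
  refine dvd_of_mk_dvd_mk ((prod_pow_dvd_prod_pow_iff hp hp' β n).mpr hβ) ?_
  rw [← hu.dvd_mul_left, ← map_mul, h, map_mul]
  exact dvd_mul_left _ _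

theorem quotient_PID_canonical_form_general
    {R : Type*} [CommRing R] [IsDomain R] [IsPrincipalIdealRing R]
    (N : R)
    {k : ℕ} (p : Fin k → R) (hirr : ∀ i, Irreducible (p i))
    (hassoc : ∀ i j, i ≠ j → ¬ Associated (p i) (p j))
    (nn : Fin k → ℕ) (hfact : N = ∏ i, p i ^ nn i) :
    (∀ x : R ⧸ Ideal.span {N}, ∃ (u : R) (α : Fin k → ℕ),
      IsUnit (Ideal.Quotient.mk (Ideal.span {N}) u) ∧ (∀ i, α i ≤ nn i) ∧
      x = Ideal.Quotient.mk (Ideal.span {N}) (u * ∏ i, p i ^ α i)) ∧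
    (∀ (u v : R) (α β : Fin k → ℕ),
      IsUnit (Ideal.Quotient.mk (Ideal.span {N}) u) →
      IsUnit (Ideal.Quotient.mk (Ideal.span {N}) v) →
      (∀ i, α i ≤ nn i) → (∀ i, β i ≤ nn i) →
      Ideal.Quotient.mk (Ideal.span {N}) (u * ∏ i, p i ^ α i) =
        Ideal.Quotient.mk (Ideal.span {N}) (v * ∏ i, p i ^ β i) →
      α = β) := by
  subst hfact
  have hp : ∀ i, Prime (p i) := fun i => (hirr i).prime
  have hp' : Pairwise fun i j => ¬ p i ∣ p j := fun i j hij hdvd =>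
    hassoc i j hij ((hirr i).associated_of_dvd (hirr j) hdvd)
  refine ⟨fun x => ?_, fun u v α β hu hv hα hβ h =>
    le_antisymm (le_of_mk_mul_prod_pow_eq hp hp' hv hα h.symm)
      (le_of_mk_mul_prod_pow_eq hp hp' hu hβ h)⟩
  obtain ⟨y, rfl⟩ := Ideal.Quotient.mk_surjective x
  exact exists_isUnit_mk_mul_prod_pow hp hp' nn y

/-- canonical representatives in the quotient of a PID. Every element of
`R/NR` is of the form `u·p_1^{α_1}⋯p_k^{α_k} + NR` with `u + NR` a unit and `α_i ≤ n_i`,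
and the exponents in such a representation are unique. -/
theorem quotient_PID_canonical_form
    {R : Type*} [CommRing R] [IsDomain R] [IsPrincipalIdealRing R]
    (N : R) (hN0 : N ≠ 0) (hNu : ¬ IsUnit N)
    {k : ℕ} (p : Fin k → R) (hirr : ∀ i, Irreducible (p i))
    (hassoc : ∀ i j, i ≠ j → ¬ Associated (p i) (p j))
    (nn : Fin k → ℕ) (hfact : N = ∏ i, p i ^ nn i) :
    (∀ x : R ⧸ Ideal.span {N}, ∃ (u : R) (α : Fin k → ℕ),
      IsUnit (Ideal.Quotient.mk (Ideal.span {N}) u) ∧ (∀ i, α i ≤ nn i) ∧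
      x = Ideal.Quotient.mk (Ideal.span {N}) (u * ∏ i, p i ^ α i)) ∧
    (∀ (u v : R) (α β : Fin k → ℕ),
      IsUnit (Ideal.Quotient.mk (Ideal.span {N}) u) →
      IsUnit (Ideal.Quotient.mk (Ideal.span {N}) v) →
      (∀ i, α i ≤ nn i) → (∀ i, β i ≤ nn i) →
      Ideal.Quotient.mk (Ideal.span {N}) (u * ∏ i, p i ^ α i) =
        Ideal.Quotient.mk (Ideal.span {N}) (v * ∏ i, p i ^ β i) →
      α = β) :=
  quotient_PID_canonical_form_general N p hirr hassoc nn hfact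
end

section
/- Let R be a principal ideal domain, N = p_1^{n_1}⋯p_k^{n_k} ∈ R a nonzero non-unit with pairwise non-associate irreducible factors p_i, R̄ = R/NR, S = R̄[x_1,…,x_n], and F = S^r with standard basis e_1,…,e_r. For l = 1,…,m let f_l = c_l·x^{u_l}·e_{k_l} with c_l ∈ R̄ nonzero, u_l ∈ ℕ^n, k_l ∈ {1,…,r}; write c_l = v_l·(d_l + NR) with v_l a unit of R̄ and d_l the canonical divisor of c_l. Let φ : S^m → F be the S-linear map sending the standard basis vector g_l to f_l. Then the kernel of φ is generated by the elements ((N/d_l) + NR)·g_l for 1 ≤ l ≤ m together with the elements r_{ij} = (lcm(d_i,d_j)/d_i + NR)·v_i^{−1}·x^{sup(u_i,u_j)−u_i}·g_i − (lcm(d_i,d_j)/d_j + NR)·v_j^{−1}·x^{sup(u_i,u_j)−u_j}·g_j for all 1 ≤ i < j ≤ m with k_i = k_j, where lcm(d_i,d_j) is the product of the p_t raised to the maxima of the exponents and sup(u_i,u_j) is the componentwise maximum in ℕ^n. -/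
open MvPolynomial
open scoped MonomialOrder

open PaperGB

/-!
Both sides are graded by (multidegree, component): the coefficient of `x^γ e_q` in `∑ w_t f_t` is
`∑ a_t c_t`, where `a_t` is the coefficient of `x^(γ - u_t)` in `w_t` and `t` runs over the
indices with `k_t = q` and `u_t ≤ γ`. So everything reduces to the syzygies of the constants
`c_t = v_t d_t` in `R̄`, supported on such a set of indices, which are then multiplied by monomials.
Lifting to `R`, a relation `∑ a_t c_t = 0` becomes `∑ b_t d_t = z N`, and `z N` is absorbed by
the annihilator relation `(N / d_t₀) g_t₀`. Over `R`, the principal ideals generated by products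
`d_a = ∏ p_i ^ a_i` form a distributive lattice, because `(d_a) ∩ (d_b) = (d_(a ⊔ b))` and
`(d_a) + (d_b) = (d_(a ⊓ b))` for pairwise coprime `p_i`. Hence in a relation `∑ b_t d_t = 0`,
`b_s d_s ∈ (d_s) ∩ ∑_(t ≠ s) (d_t) = ∑_(t ≠ s) (lcm(d_s, d_t))`, so subtracting pair relations
clears the coordinate `s`, and induction on the support shows that the pair relations generate.
-/

namespace TermSyzygy

section prodPow

variable {R κ ι : Type*} [CommRing R] [Fintype κ]

def prodPow (p : κ → R) (a : κ → ℕ) : R := ∏ i, p i ^ a i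

variable {p : κ → R}

theorem prodPow_add (a b : κ → ℕ) : prodPow p (a + b) = prodPow p a * prodPow p b := by
  simp only [prodPow, Pi.add_apply, pow_add, Finset.prod_mul_distrib]

theorem prodPow_sub_mul {a b : κ → ℕ} (h : b ≤ a) :
    prodPow p (a - b) * prodPow p b = prodPow p a := by
  rw [← prodPow_add, tsub_add_cancel_of_le h]

theorem prodPow_dvd_prodPow {a b : κ → ℕ} (h : b ≤ a) : prodPow p b ∣ prodPow p a :=
  Dvd.intro_left _ (prodPow_sub_mul h)

theorem prodPow_ne_zero [IsDomain R] (hp0 : ∀ i, p i ≠ 0) (a : κ → ℕ) : prodPow p a ≠ 0 :=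
  Finset.prod_ne_zero_iff.2 fun i _ => pow_ne_zero _ (hp0 i)

variable (hp : Pairwise fun i j => IsCoprime (p i) (p j))
include hp

theorem prodPow_sup_dvd {a b : κ → ℕ} {x : R} (ha : prodPow p a ∣ x) (hb : prodPow p b ∣ x) :
    prodPow p (a ⊔ b) ∣ x := by
  refine Finset.prod_dvd_of_coprime (fun i _ j _ hij => (hp hij).pow) fun i _ => ?_
  have hdvd (c : κ → ℕ) (hc : prodPow p c ∣ x) : p i ^ c i ∣ x :=
    (Finset.dvd_prod_of_mem (fun i => p i ^ c i) (Finset.mem_univ i)).trans hc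
  rcases le_total (a i) (b i) with h | h
  · simpa [h] using hdvd b hb
  · simpa [h] using hdvd a ha

theorem isCoprime_prodPow {a b : κ → ℕ} (h : ∀ i, a i = 0 ∨ b i = 0) :
    IsCoprime (prodPow p a) (prodPow p b) :=
  IsCoprime.prod_left fun i _ => IsCoprime.prod_right fun j _ => by
    obtain rfl | hij := eq_or_ne i j
    · rcases h i with h | h <;> simp [h, isCoprime_one_left, isCoprime_one_right]
    · exact (hp hij).pow

theorem span_prodPow_inf_span_prodPow (a b : κ → ℕ) :
    Ideal.span {prodPow p a} ⊓ Ideal.span {prodPow p b} = Ideal.span {prodPow p (a ⊔ b)} := by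
  ext x
  simp only [Submodule.mem_inf, Ideal.mem_span_singleton]
  exact ⟨fun h => prodPow_sup_dvd hp h.1 h.2, fun h =>
    ⟨(prodPow_dvd_prodPow le_sup_left).trans h, (prodPow_dvd_prodPow le_sup_right).trans h⟩⟩

theorem span_prodPow_sup_span_prodPow (a b : κ → ℕ) :
    Ideal.span {prodPow p a} ⊔ Ideal.span {prodPow p b} = Ideal.span {prodPow p (a ⊓ b)} := by
  refine le_antisymm (sup_le ?_ ?_) ?_
  · exact Ideal.span_singleton_le_span_singleton.2 (prodPow_dvd_prodPow inf_le_left)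
  · exact Ideal.span_singleton_le_span_singleton.2 (prodPow_dvd_prodPow inf_le_right)
  obtain ⟨x, y, hxy⟩ := isCoprime_prodPow hp (a := a - a ⊓ b) (b := b - a ⊓ b)
    fun i => by simp only [Pi.sub_apply, Pi.inf_apply]; omega
  have hgcd : x * prodPow p a + y * prodPow p b = prodPow p (a ⊓ b) := by
    rw [← prodPow_sub_mul (inf_le_left : a ⊓ b ≤ a), ← prodPow_sub_mul (inf_le_right : a ⊓ b ≤ b)]
    linear_combination prodPow p (a ⊓ b) * hxy
  rw [Ideal.span_singleton_le_iff_mem, ← hgcd]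
  exact add_mem (Ideal.mem_sup_left (Ideal.mul_mem_left _ _ (Ideal.mem_span_singleton_self _)))
    (Ideal.mem_sup_right (Ideal.mul_mem_left _ _ (Ideal.mem_span_singleton_self _)))

theorem iSup_span_prodPow {T : Finset ι} (hT : T.Nonempty) (β : ι → κ → ℕ) :
    ⨆ t ∈ T, Ideal.span {prodPow p (β t)} = Ideal.span {prodPow p (T.inf' hT β)} := by
  classical
  induction hT using Finset.Nonempty.cons_induction with
  | singleton a => simp
  | cons a T ha hT ih =>
    rw [Finset.inf'_cons hT, ← span_prodPow_sup_span_prodPow hp, ← ih, Finset.cons_eq_insert,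
      Finset.iSup_insert]

theorem span_prodPow_inf_iSup (a : κ → ℕ) (T : Finset ι) (β : ι → κ → ℕ) :
    Ideal.span {prodPow p a} ⊓ ⨆ t ∈ T, Ideal.span {prodPow p (β t)} =
      ⨆ t ∈ T, Ideal.span {prodPow p (a ⊔ β t)} := by
  rcases T.eq_empty_or_nonempty with rfl | hT
  · simp
  rw [iSup_span_prodPow hp hT, iSup_span_prodPow hp hT, span_prodPow_inf_span_prodPow hp,
    Finset.inf'_sup_distrib_left]

theorem exists_eq_sum_of_mul_prodPow_mem_iSup [IsDomain R] (hp0 : ∀ i, p i ≠ 0) {x : R}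
    {a : κ → ℕ} {T : Finset ι} {β : ι → κ → ℕ}
    (hx : x * prodPow p a ∈ ⨆ t ∈ T, Ideal.span {prodPow p (β t)}) :
    ∃ c : ι → R, x = ∑ t ∈ T, c t * prodPow p (a ⊔ β t - a) := by
  have hmem : x * prodPow p a ∈ ⨆ t ∈ T, Ideal.span {prodPow p (a ⊔ β t)} := by
    rw [← span_prodPow_inf_iSup hp]
    exact ⟨Ideal.mem_span_singleton.2 (dvd_mul_left _ _), hx⟩
  obtain ⟨μ, hμ⟩ := (Submodule.mem_iSup_finset_iff_exists_sum _ _).1 hmem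
  choose c hc using fun t => Ideal.mem_span_singleton'.1 (μ t).2
  refine ⟨c, mul_right_cancel₀ (prodPow_ne_zero hp0 a) ?_⟩
  rw [← hμ, Finset.sum_mul]
  refine Finset.sum_congr rfl fun t _ => ?_
  rw [← hc t, mul_assoc, prodPow_sub_mul le_sup_left]

end prodPow

section pairSyzygy

variable {R κ ι : Type*} [CommRing R] [Fintype κ] [DecidableEq ι]

def pairSyzygy (p : κ → R) (α : ι → κ → ℕ) (i j : ι) : ι → R :=
  Pi.single i (prodPow p (α i ⊔ α j - α i)) - Pi.single j (prodPow p (α i ⊔ α j - α j))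

variable {p : κ → R} {α : ι → κ → ℕ}

theorem pairSyzygy_swap (i j : ι) : pairSyzygy p α j i = -pairSyzygy p α i j := by
  simp only [pairSyzygy, sup_comm (α j), neg_sub]

theorem pairSyzygy_apply_of_ne {i j t : ι} (hi : t ≠ i) (hj : t ≠ j) :
    pairSyzygy p α i j t = 0 := by
  simp [pairSyzygy, hi, hj]

theorem pairSyzygy_apply_left {i j : ι} (h : i ≠ j) :
    pairSyzygy p α i j i = prodPow p (α i ⊔ α j - α i) := by
  simp [pairSyzygy, h]

variable [Fintype ι]

theorem linearCombination_pairSyzygy (i j : ι) :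
    Fintype.linearCombination R (fun t => prodPow p (α t)) (pairSyzygy p α i j) = 0 := by
  simp [pairSyzygy, prodPow_sub_mul le_sup_left, prodPow_sub_mul le_sup_right]

theorem mem_span_pairSyzygy [IsDomain R] (hp0 : ∀ i, p i ≠ 0)
    (hp : Pairwise fun i j => IsCoprime (p i) (p j)) (T : Finset ι) {b : ι → R}
    (hb : ∀ t ∉ T, b t = 0)
    (hsum : Fintype.linearCombination R (fun t => prodPow p (α t)) b = 0) :
    b ∈ Submodule.span R {x | ∃ i ∈ T, ∃ j ∈ T, x = pairSyzygy p α i j} := by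
  induction T using Finset.induction_on generalizing b with
  | empty =>
    obtain rfl : b = 0 := funext fun t => hb t (Finset.notMem_empty t)
    exact zero_mem _
  | insert s T hs ih =>
    have hbs : b s * prodPow p (α s) = -∑ t ∈ T, b t * prodPow p (α t) := by
      rw [Fintype.linearCombination_apply, ← Finset.sum_subset (Finset.subset_univ (insert s T))
        (fun t _ ht => by simp [hb t ht]), Finset.sum_insert hs] at hsum
      exact eq_neg_of_add_eq_zero_left hsum
    obtain ⟨c, hc⟩ := exists_eq_sum_of_mul_prodPow_mem_iSup hp hp0 (x := b s) (T := T) <| by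
      rw [hbs]
      exact neg_mem (sum_mem fun t ht => Submodule.mem_iSup_of_mem t
        (Submodule.mem_iSup_of_mem ht (Ideal.mul_mem_left _ _ (Ideal.mem_span_singleton_self _))))
    set b' := b - ∑ t ∈ T, c t • pairSyzygy p α s t
    rw [show b = b' + ∑ t ∈ T, c t • pairSyzygy p α s t by simp [b']]
    refine add_mem (Submodule.span_mono ?_ (ih ?_ ?_)) (sum_mem fun t ht => Submodule.smul_mem _ _
      (Submodule.subset_span ⟨s, Finset.mem_insert_self _ _, t, Finset.mem_insert_of_mem ht, rfl⟩))
    · rintro x ⟨i, hi, j, hj, rfl⟩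
      exact ⟨i, Finset.mem_insert_of_mem hi, j, Finset.mem_insert_of_mem hj, rfl⟩
    · intro t ht
      simp only [b', Pi.sub_apply, Finset.sum_apply, Pi.smul_apply, smul_eq_mul]
      obtain rfl | hts := eq_or_ne t s
      · rw [hc, sub_eq_zero]
        exact Finset.sum_congr rfl fun t' ht' => by
          rw [pairSyzygy_apply_left (ne_of_mem_of_not_mem ht' hs).symm]
      · rw [hb t (by simp [hts, ht]), Finset.sum_eq_zero fun t' ht' => by
          rw [pairSyzygy_apply_of_ne hts (ne_of_mem_of_not_mem ht' ht).symm, mul_zero], sub_zero]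
    · simp [b', hsum, linearCombination_pairSyzygy]

end pairSyzygy

section quotient

variable {R κ ι : Type*} [CommRing R] [Fintype κ] {I : Ideal R}

def twistedMk (I : Ideal R) (v : ι → (R ⧸ I)ˣ) : (ι → R) →ₗ[R] ι → R ⧸ I :=
  LinearMap.pi fun t => LinearMap.mulLeft R (↑(v t)⁻¹ : R ⧸ I) ∘ₗ
    (Ideal.Quotient.mkₐ R I).toLinearMap ∘ₗ LinearMap.proj t

variable {v : ι → (R ⧸ I)ˣ}

theorem twistedMk_apply (b : ι → R) (t : ι) :
    twistedMk I v b t = ↑(v t)⁻¹ * Ideal.Quotient.mk I (b t) :=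
  rfl

theorem twistedMk_single [DecidableEq ι] (t : ι) (x : R) :
    twistedMk I v (Pi.single t x) = Pi.single t (↑(v t)⁻¹ * Ideal.Quotient.mk I x) := by
  funext s
  obtain rfl | hs := eq_or_ne s t <;> simp [twistedMk_apply, *]

theorem exists_twistedMk_eq {T : Finset ι} {a : ι → R ⧸ I} (ha : ∀ t ∉ T, a t = 0) :
    ∃ b : ι → R, (∀ t ∉ T, b t = 0) ∧ twistedMk I v b = a := by
  classical
  choose b hb using fun t => Ideal.Quotient.mk_surjective (I := I) (v t * a t)
  refine ⟨fun t => if t ∈ T then b t else 0, fun t ht => if_neg ht, funext fun t => ?_⟩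
  by_cases ht : t ∈ T <;> simp [twistedMk_apply, ht, hb, ha]

variable {p : κ → R} {α : ι → κ → ℕ}

theorem twistedMk_pairSyzygy_ne_zero [DecidableEq ι] {i j t : ι}
    (h : twistedMk I v (pairSyzygy p α i j) t ≠ 0) : t = i ∨ t = j := by
  by_contra! hne
  exact h (by rw [twistedMk_apply, pairSyzygy_apply_of_ne hne.1 hne.2, map_zero, mul_zero])

variable [Fintype ι] {c : ι → R ⧸ I}

theorem linearCombination_twistedMk
    (hc : ∀ t, c t = v t * Ideal.Quotient.mk I (prodPow p (α t))) (b : ι → R) :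
    Fintype.linearCombination (R ⧸ I) c (twistedMk I v b) =
      Ideal.Quotient.mk I (Fintype.linearCombination R (fun t => prodPow p (α t)) b) := by
  simp only [Fintype.linearCombination_apply, twistedMk_apply, hc, map_sum, smul_eq_mul, map_mul]
  refine Finset.sum_congr rfl fun t _ => ?_
  rw [mul_mul_mul_comm, Units.inv_mul, one_mul]

theorem mem_span_single_union_twistedMk_pairSyzygy [DecidableEq ι] [IsDomain R]
    (hp0 : ∀ i, p i ≠ 0) (hp : Pairwise fun i j => IsCoprime (p i) (p j)) {N : R}
    {nn : κ → ℕ} (hN : N = prodPow p nn) (hα : ∀ t, α t ≤ nn)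
    {v : ι → (R ⧸ Ideal.span {N})ˣ} {c : ι → R ⧸ Ideal.span {N}}
    (hc : ∀ t, c t = v t * Ideal.Quotient.mk (Ideal.span {N}) (prodPow p (α t)))
    (T : Finset ι) {a : ι → R ⧸ Ideal.span {N}} (ha : ∀ t ∉ T, a t = 0)
    (hsum : Fintype.linearCombination (R ⧸ Ideal.span {N}) c a = 0) :
    a ∈ Submodule.span (R ⧸ Ideal.span {N})
      ({x | ∃ t, x = Pi.single t (Ideal.Quotient.mk (Ideal.span {N}) (prodPow p (nn - α t)))} ∪
        {x | ∃ i ∈ T, ∃ j ∈ T, x = twistedMk (Ideal.span {N}) v (pairSyzygy p α i j)}) := by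
  rcases T.eq_empty_or_nonempty with rfl | ⟨t₀, ht₀⟩
  · obtain rfl : a = 0 := funext fun t => ha t (Finset.notMem_empty t)
    exact zero_mem _
  obtain ⟨b, hb, rfl⟩ := exists_twistedMk_eq (v := v) ha
  obtain ⟨z, hz⟩ : N ∣ Fintype.linearCombination R (fun t => prodPow p (α t)) b := by
    rw [← Ideal.mem_span_singleton, ← Ideal.Quotient.eq_zero_iff_mem,
      ← linearCombination_twistedMk hc, hsum]
  -- over `R` the relation only holds up to `N * z`, which is absorbed at the index `t₀`
  set b' := b - Pi.single t₀ (z * prodPow p (nn - α t₀))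
  have hb' : b' ∈ Submodule.span R {x | ∃ i ∈ T, ∃ j ∈ T, x = pairSyzygy p α i j} := by
    refine mem_span_pairSyzygy hp0 hp T (fun t ht => ?_) ?_
    · simp [b', hb t ht, (ne_of_mem_of_not_mem ht₀ ht).symm]
    · rw [map_sub, hz, Fintype.linearCombination_apply_single, smul_eq_mul, mul_assoc,
        prodPow_sub_mul (hα t₀), hN, mul_comm, sub_self]
  rw [show b = b' + Pi.single t₀ (z * prodPow p (nn - α t₀)) by simp [b'], map_add,
    twistedMk_single, map_mul, ← mul_assoc, ← smul_eq_mul, Pi.single_smul']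
  refine add_mem ?_ (Submodule.smul_mem _ _ (Submodule.subset_span (Or.inl ⟨t₀, rfl⟩)))
  have := Submodule.mem_map_of_mem (f := twistedMk (Ideal.span {N}) v) hb'
  rw [Submodule.map_span] at this
  refine Submodule.span_le_restrictScalars R _ _ (Submodule.span_mono ?_ this)
  rintro _ ⟨x, ⟨i, hi, j, hj, rfl⟩, rfl⟩
  exact Or.inr ⟨i, hi, j, hj, rfl⟩

end quotient

section polynomial

variable {A σ ι ρ : Type*} [CommRing A] {u : ι → σ →₀ ℕ}

theorem sum_monomial_coeff_sub {p : MvPolynomial σ A} {v : σ →₀ ℕ} {Γ : Finset (σ →₀ ℕ)}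
    (hΓ : ∀ δ ∈ p.support, δ + v ∈ Γ) :
    ∑ γ ∈ Γ, monomial (γ - v) (if v ≤ γ then coeff (γ - v) p else 0) = p := by
  classical
  ext m
  have hterm (γ : σ →₀ ℕ) : coeff m (monomial (γ - v) (if v ≤ γ then coeff (γ - v) p else 0)) =
      if m + v = γ then coeff m p else 0 := by
    rw [coeff_monomial]
    by_cases hγ : m + v = γ
    · subst hγ
      simp
    · rw [if_neg hγ]
      split_ifs with h₁ h₂ <;> first | rfl | exact absurd (h₁ ▸ tsub_add_cancel_of_le h₂) hγ
  rw [coeff_sum, Finset.sum_congr rfl fun γ _ => hterm γ, Finset.sum_ite_eq]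
  split_ifs with hm
  · rfl
  · exact (notMem_support_iff.1 fun h => hm (hΓ m h)).symm

noncomputable def homLift (u : ι → σ →₀ ℕ) (γ : σ →₀ ℕ) : (ι → A) →ₗ[A] ι → MvPolynomial σ A :=
  LinearMap.pi fun t => monomial (γ - u t) ∘ₗ LinearMap.proj t

theorem homLift_apply (γ : σ →₀ ℕ) (a : ι → A) (t : ι) :
    homLift u γ a t = monomial (γ - u t) (a t) :=
  rfl

theorem homLift_single [DecidableEq ι] (γ : σ →₀ ℕ) (t : ι) (x : A) :
    homLift u γ (Pi.single t x) = Pi.single t (monomial (γ - u t) x) := by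
  funext s
  obtain rfl | hs := eq_or_ne s t <;> simp [homLift_apply, *]

theorem homLift_eq_monomial_smul {γ γ' : σ →₀ ℕ} (hγ : γ' ≤ γ) {a : ι → A}
    (ha : ∀ t, a t ≠ 0 → u t ≤ γ') :
    homLift u γ a = monomial (γ - γ') (1 : A) • homLift u γ' a := by
  funext t
  rw [Pi.smul_apply, homLift_apply, homLift_apply, smul_eq_mul, monomial_mul, one_mul]
  obtain h | h := eq_or_ne (a t) 0
  · simp [h]
  · rw [tsub_add_tsub_cancel hγ (ha t h)]

variable [DecidableEq ρ] {kk : ι → ρ} {c : ι → A}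

noncomputable def monomialTerm (kk : ι → ρ) (u : ι → σ →₀ ℕ) (c : ι → A) (t : ι) :
    ρ → MvPolynomial σ A :=
  Pi.single (kk t) (monomial (u t) (c t))

def homSupport [Fintype ι] (kk : ι → ρ) (u : ι → σ →₀ ℕ) (γ : σ →₀ ℕ) (q : ρ) : Finset ι :=
  Finset.univ.filter fun t => kk t = q ∧ u t ≤ γ

noncomputable def homComponent (kk : ι → ρ) (u : ι → σ →₀ ℕ) (w : ι → MvPolynomial σ A)
    (γ : σ →₀ ℕ) (q : ρ) (t : ι) : A :=
  if kk t = q ∧ u t ≤ γ then coeff (γ - u t) (w t) else 0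

variable [Fintype ι]

theorem linearCombination_homLift {γ : σ →₀ ℕ} {q : ρ} {a : ι → A}
    (ha : ∀ t, a t ≠ 0 → kk t = q ∧ u t ≤ γ) :
    Fintype.linearCombination (MvPolynomial σ A) (monomialTerm kk u c) (homLift u γ a) =
      Pi.single q (monomial γ (Fintype.linearCombination A c a)) := by
  have hterm (t : ι) : homLift u γ a t • monomialTerm kk u c t =
      Pi.single q (monomial γ (a t * c t)) := by
    rw [homLift_apply, monomialTerm, ← Pi.single_smul', smul_eq_mul, monomial_mul]
    obtain h | h := eq_or_ne (a t) 0
    · simp [h]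
    · rw [(ha t h).1, tsub_add_cancel_of_le (ha t h).2]
  simp only [Fintype.linearCombination_apply, hterm, smul_eq_mul, map_sum]
  exact (map_sum (AddMonoidHom.single (fun _ => MvPolynomial σ A) q) _ _).symm

theorem homComponent_of_notMem {w : ι → MvPolynomial σ A} {γ : σ →₀ ℕ} {q : ρ} {t : ι}
    (ht : t ∉ homSupport kk u γ q) : homComponent kk u w γ q t = 0 :=
  if_neg fun h => ht (Finset.mem_filter.2 ⟨Finset.mem_univ t, h⟩)

theorem coeff_linearCombination_apply (w : ι → MvPolynomial σ A) (γ : σ →₀ ℕ) (q : ρ) :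
    coeff γ (Fintype.linearCombination (MvPolynomial σ A) (monomialTerm kk u c) w q) =
      Fintype.linearCombination A c (homComponent kk u w γ q) := by
  simp only [Fintype.linearCombination_apply, Finset.sum_apply, coeff_sum, Pi.smul_apply,
    monomialTerm, smul_eq_mul, homComponent, Pi.single_apply]
  refine Finset.sum_congr rfl fun t _ => ?_
  by_cases hq : kk t = q
  · by_cases hγ : u t ≤ γ <;> simp [hq, hγ, coeff_mul_monomial']
  · simp [hq, Ne.symm hq]

theorem exists_eq_sum_homLift_homComponent [Fintype ρ] (w : ι → MvPolynomial σ A) :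
    ∃ Γ : Finset (σ →₀ ℕ), w = ∑ γ ∈ Γ, ∑ q, homLift u γ (homComponent kk u w γ q) := by
  classical
  refine ⟨Finset.univ.biUnion fun t => (w t).support.image (· + u t), funext fun t => ?_⟩
  have hq (γ : σ →₀ ℕ) : ∑ q, homLift u γ (homComponent kk u w γ q) t =
      monomial (γ - u t) (if u t ≤ γ then coeff (γ - u t) (w t) else 0) := by
    simp only [homLift_apply, ← map_sum, homComponent, ite_and, Finset.sum_ite_eq,
      Finset.mem_univ, if_true]
  simp only [Finset.sum_apply, hq]
  exact (sum_monomial_coeff_sub fun δ hδ => Finset.mem_biUnion.2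
    ⟨t, Finset.mem_univ _, Finset.mem_image_of_mem _ hδ⟩).symm

end polynomial

section syzygies

variable {R κ ι ρ σ : Type*} [CommRing R] [Fintype κ] {I : Ideal R} {p : κ → R}
  {α : ι → κ → ℕ} {v : ι → (R ⧸ I)ˣ} {u : ι → σ →₀ ℕ}

noncomputable def termSyzygy [DecidableEq ι] (I : Ideal R) (p : κ → R) (α : ι → κ → ℕ)
    (v : ι → (R ⧸ I)ˣ) (u : ι → σ →₀ ℕ) (i j : ι) : ι → MvPolynomial σ (R ⧸ I) :=
  homLift u (u i ⊔ u j) (twistedMk I v (pairSyzygy p α i j))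

variable [DecidableEq ι]

theorem termSyzygy_eq (i j : ι) :
    termSyzygy I p α v u i j =
      Pi.single i (monomial (u i ⊔ u j - u i)
        (↑(v i)⁻¹ * Ideal.Quotient.mk I (prodPow p (α i ⊔ α j - α i)))) -
      Pi.single j (monomial (u i ⊔ u j - u j)
        (↑(v j)⁻¹ * Ideal.Quotient.mk I (prodPow p (α i ⊔ α j - α j)))) := by
  funext t
  simp only [termSyzygy, homLift_apply, twistedMk_apply, pairSyzygy, Pi.sub_apply,
    Pi.single_apply]
  split_ifs <;> simp_all

theorem termSyzygy_swap (i j : ι) : termSyzygy I p α v u j i = -termSyzygy I p α v u i j := by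
  rw [termSyzygy, termSyzygy, sup_comm, pairSyzygy_swap, map_neg, map_neg]

theorem termSyzygy_self (i : ι) : termSyzygy I p α v u i i = 0 := by
  simp [termSyzygy, pairSyzygy]

theorem linearCombination_termSyzygy [Fintype ι] [DecidableEq ρ] {kk : ι → ρ} {c : ι → R ⧸ I}
    (hc : ∀ t, c t = v t * Ideal.Quotient.mk I (prodPow p (α t))) {i j : ι} (h : kk i = kk j) :
    Fintype.linearCombination _ (monomialTerm kk u c) (termSyzygy I p α v u i j) = 0 := by
  rw [termSyzygy, linearCombination_homLift (q := kk i), linearCombination_twistedMk hc,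
    linearCombination_pairSyzygy, map_zero, map_zero, Pi.single_zero]
  intro t ht
  rcases twistedMk_pairSyzygy_ne_zero ht with rfl | rfl
  exacts [⟨rfl, le_sup_left⟩, ⟨h.symm, le_sup_right⟩]

end syzygies

section generators

variable {R κ ι ρ σ : Type*} [CommRing R] [Fintype κ] [LinearOrder ι] {p : κ → R}
  {α : ι → κ → ℕ} {u : ι → σ →₀ ℕ} {kk : ι → ρ} {N : R} {nn : κ → ℕ}
  {v : ι → (R ⧸ Ideal.span {N})ˣ}

def syzygyGens (N : R) (p : κ → R) (nn : κ → ℕ) (α : ι → κ → ℕ)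
    (v : ι → (R ⧸ Ideal.span {N})ˣ) (u : ι → σ →₀ ℕ) (kk : ι → ρ) :
    Set (ι → MvPolynomial σ (R ⧸ Ideal.span {N})) :=
  {h | ∃ t : ι, h = Pi.single t (C (Ideal.Quotient.mk (Ideal.span {N}) (prodPow p (nn - α t))))} ∪
    {h | ∃ i j, i < j ∧ kk i = kk j ∧ h = termSyzygy (Ideal.span {N}) p α v u i j}

theorem termSyzygy_mem_span_syzygyGens {i j : ι} (h : kk i = kk j) :
    termSyzygy (Ideal.span {N}) p α v u i j ∈
      Submodule.span (MvPolynomial σ (R ⧸ Ideal.span {N})) (syzygyGens N p nn α v u kk) := by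
  rcases lt_trichotomy i j with hij | rfl | hij
  · exact Submodule.subset_span (Or.inr ⟨i, j, hij, h, rfl⟩)
  · rw [termSyzygy_self]
    exact zero_mem _
  · rw [← neg_neg (termSyzygy _ p α v u i j), ← termSyzygy_swap]
    exact neg_mem (Submodule.subset_span (Or.inr ⟨j, i, hij, h.symm, rfl⟩))

variable [Fintype ι] [DecidableEq ρ] {c : ι → R ⧸ Ideal.span {N}}

theorem linearCombination_eq_zero_of_mem_syzygyGens (hN : N = prodPow p nn)
    (hα : ∀ t, α t ≤ nn)
    (hc : ∀ t, c t = v t * Ideal.Quotient.mk (Ideal.span {N}) (prodPow p (α t)))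
    {x : ι → MvPolynomial σ (R ⧸ Ideal.span {N})} (hx : x ∈ syzygyGens N p nn α v u kk) :
    Fintype.linearCombination _ (monomialTerm kk u c) x = 0 := by
  rcases hx with ⟨t, rfl⟩ | ⟨i, j, -, h, rfl⟩
  · have hann : Ideal.Quotient.mk (Ideal.span {N}) (prodPow p (nn - α t)) * c t = 0 := by
      rw [hc, mul_left_comm, ← map_mul, prodPow_sub_mul (hα t), ← hN,
        Ideal.Quotient.eq_zero_iff_mem.2 (Ideal.mem_span_singleton_self N), mul_zero]
    rw [Fintype.linearCombination_apply_single, monomialTerm, ← Pi.single_smul', smul_eq_mul,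
      C_mul_monomial, hann, map_zero, Pi.single_zero]
  · exact linearCombination_termSyzygy hc h

theorem homLift_mem_span_syzygyGens {γ : σ →₀ ℕ} {q : ρ} {a : ι → R ⧸ Ideal.span {N}}
    (ha : a ∈ Submodule.span (R ⧸ Ideal.span {N})
      ({x | ∃ t, x = Pi.single t (Ideal.Quotient.mk (Ideal.span {N}) (prodPow p (nn - α t)))} ∪
        {x | ∃ i ∈ homSupport kk u γ q, ∃ j ∈ homSupport kk u γ q,
          x = twistedMk (Ideal.span {N}) v (pairSyzygy p α i j)})) :
    homLift u γ a ∈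
      Submodule.span (MvPolynomial σ (R ⧸ Ideal.span {N})) (syzygyGens N p nn α v u kk) := by
  have := Submodule.mem_map_of_mem (f := homLift u γ) ha
  rw [Submodule.map_span] at this
  refine (Submodule.span_le (p := Submodule.restrictScalars (R ⧸ Ideal.span {N})
    (Submodule.span (MvPolynomial σ (R ⧸ Ideal.span {N})) (syzygyGens N p nn α v u kk)))).2 ?_ this
  rintro _ ⟨x, ⟨t, rfl⟩ | ⟨i, hi, j, hj, rfl⟩, rfl⟩
  · have hsingle (y : R ⧸ Ideal.span {N}) : Pi.single t (monomial (γ - u t) y) =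
        monomial (γ - u t) (1 : R ⧸ Ideal.span {N}) • Pi.single t (C y) := by
      rw [← Pi.single_smul', smul_eq_mul, mul_comm, C_mul_monomial, mul_one]
    rw [SetLike.mem_coe, Submodule.restrictScalars_mem, homLift_single, hsingle]
    exact Submodule.smul_mem _ _ (Submodule.subset_span (Or.inl ⟨t, rfl⟩))
  · simp only [homSupport, Finset.mem_filter, Finset.mem_univ, true_and] at hi hj
    rw [SetLike.mem_coe, Submodule.restrictScalars_mem,
      homLift_eq_monomial_smul (sup_le hi.2 hj.2)]
    · exact Submodule.smul_mem _ _ (termSyzygy_mem_span_syzygyGens (hi.1.trans hj.1.symm))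
    intro t ht
    rcases twistedMk_pairSyzygy_ne_zero ht with rfl | rfl
    exacts [le_sup_left, le_sup_right]

theorem linearCombination_monomialTerm_eq_zero_iff [Fintype ρ] [IsDomain R]
    (hp0 : ∀ i, p i ≠ 0) (hp : Pairwise fun i j => IsCoprime (p i) (p j))
    (hN : N = prodPow p nn) (hα : ∀ t, α t ≤ nn)
    (hc : ∀ t, c t = v t * Ideal.Quotient.mk (Ideal.span {N}) (prodPow p (α t)))
    (w : ι → MvPolynomial σ (R ⧸ Ideal.span {N})) :
    Fintype.linearCombination _ (monomialTerm kk u c) w = 0 ↔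
      w ∈ Submodule.span (MvPolynomial σ (R ⧸ Ideal.span {N})) (syzygyGens N p nn α v u kk) := by
  refine ⟨fun hw => ?_, fun hw => ?_⟩
  · obtain ⟨Γ, hΓ⟩ := exists_eq_sum_homLift_homComponent (u := u) (kk := kk) w
    rw [hΓ]
    refine sum_mem fun γ _ => sum_mem fun q _ => homLift_mem_span_syzygyGens (q := q) ?_
    refine mem_span_single_union_twistedMk_pairSyzygy hp0 hp hN hα hc _
      (fun t => homComponent_of_notMem) ?_
    rw [← coeff_linearCombination_apply, hw]
    rfl
  · exact Submodule.span_le (p := LinearMap.ker _) |>.2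
      (fun x hx => linearCombination_eq_zero_of_mem_syzygyGens hN hα hc hx) hw

end generators

end TermSyzygy

theorem syzygies_of_terms_quotient_PID_general
    {n : ℕ} {R : Type*} [CommRing R] [IsDomain R] [IsPrincipalIdealRing R]
    (N : R)
    {k : ℕ} (p : Fin k → R) (hirr : ∀ i, Irreducible (p i))
    (hassoc : ∀ i j, i ≠ j → ¬ Associated (p i) (p j))
    (nn : Fin k → ℕ) (hfact : N = ∏ i, p i ^ nn i)
    {r M : ℕ} (c : Fin M → (R ⧸ Ideal.span {N}))
    (v : Fin M → (R ⧸ Ideal.span {N})ˣ) (α : Fin M → Fin k → ℕ)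
    (hα : ∀ i t, α i t ≤ nn t)
    (hcv : ∀ i, c i = ↑(v i) * Ideal.Quotient.mk (Ideal.span {N}) (∏ t, p t ^ α i t))
    (u : Fin M → (Fin n →₀ ℕ)) (kk : Fin M → Fin r)
    (f : Fin M → (Fin r → MvPolynomial (Fin n) (R ⧸ Ideal.span {N})))
    (hf : ∀ t, f t = Pi.single (kk t) (MvPolynomial.monomial (u t) (c t)))
    (rr : Fin M → Fin M → (Fin M → MvPolynomial (Fin n) (R ⧸ Ideal.span {N})))
    (hrr : ∀ i j : Fin M, rr i j =
      Pi.single i (MvPolynomial.monomial ((u i ⊔ u j) - u i)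
        (↑(v i)⁻¹ * Ideal.Quotient.mk (Ideal.span {N})
          (∏ t, p t ^ (max (α i t) (α j t) - α i t))))
      - Pi.single j (MvPolynomial.monomial ((u i ⊔ u j) - u j)
        (↑(v j)⁻¹ * Ideal.Quotient.mk (Ideal.span {N})
          (∏ t, p t ^ (max (α i t) (α j t) - α j t)))))
    (w : Fin M → MvPolynomial (Fin n) (R ⧸ Ideal.span {N})) :
    (∑ t, w t • f t = 0) ↔
      w ∈ Submodule.span (MvPolynomial (Fin n) (R ⧸ Ideal.span {N}))
        ({h | ∃ t : Fin M, h = Pi.single t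
            (MvPolynomial.C (Ideal.Quotient.mk (Ideal.span {N})
              (∏ s, p s ^ (nn s - α t s))))} ∪
         {h | ∃ i j : Fin M, i < j ∧ kk i = kk j ∧ h = rr i j}) := by
  have hp : Pairwise fun i j => IsCoprime (p i) (p j) := fun i j hij =>
    (hirr i).coprime_iff_not_dvd.2 fun hdvd =>
      hassoc i j hij ((hirr i).associated_of_dvd (hirr j) hdvd)
  obtain rfl : f = TermSyzygy.monomialTerm kk u c := funext hf
  obtain rfl : rr = TermSyzygy.termSyzygy (Ideal.span {N}) p α v u :=
    funext₂ fun i j => (hrr i j).trans (TermSyzygy.termSyzygy_eq i j).symm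
  exact TermSyzygy.linearCombination_monomialTerm_eq_zero_iff (fun i => (hirr i).ne_zero) hp
    hfact hα hcv w

/-- over `R̄ = R/NR`, syzygies of terms `c_l x^{u_l} e_{k_l}` in `F = S^r`
are generated by the annihilator relations and the relations `r_{ij}`. -/
theorem syzygies_of_terms_quotient_PID
    {n : ℕ} {R : Type*} [CommRing R] [IsDomain R] [IsPrincipalIdealRing R]
    (N : R) (hN0 : N ≠ 0) (hNu : ¬ IsUnit N)
    {k : ℕ} (p : Fin k → R) (hirr : ∀ i, Irreducible (p i))
    (hassoc : ∀ i j, i ≠ j → ¬ Associated (p i) (p j))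
    (nn : Fin k → ℕ) (hfact : N = ∏ i, p i ^ nn i)
    {r M : ℕ} (c : Fin M → (R ⧸ Ideal.span {N})) (hc : ∀ i, c i ≠ 0)
    (v : Fin M → (R ⧸ Ideal.span {N})ˣ) (α : Fin M → Fin k → ℕ)
    (hα : ∀ i t, α i t ≤ nn t)
    (hcv : ∀ i, c i = ↑(v i) * Ideal.Quotient.mk (Ideal.span {N}) (∏ t, p t ^ α i t))
    (u : Fin M → (Fin n →₀ ℕ)) (kk : Fin M → Fin r)
    (f : Fin M → (Fin r → MvPolynomial (Fin n) (R ⧸ Ideal.span {N})))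
    (hf : ∀ t, f t = Pi.single (kk t) (MvPolynomial.monomial (u t) (c t)))
    (rr : Fin M → Fin M → (Fin M → MvPolynomial (Fin n) (R ⧸ Ideal.span {N})))
    (hrr : ∀ i j : Fin M, rr i j =
      Pi.single i (MvPolynomial.monomial ((u i ⊔ u j) - u i)
        (↑(v i)⁻¹ * Ideal.Quotient.mk (Ideal.span {N})
          (∏ t, p t ^ (max (α i t) (α j t) - α i t))))
      - Pi.single j (MvPolynomial.monomial ((u i ⊔ u j) - u j)
        (↑(v j)⁻¹ * Ideal.Quotient.mk (Ideal.span {N})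
          (∏ t, p t ^ (max (α i t) (α j t) - α j t)))))
    (w : Fin M → MvPolynomial (Fin n) (R ⧸ Ideal.span {N})) :
    (∑ t, w t • f t = 0) ↔
      w ∈ Submodule.span (MvPolynomial (Fin n) (R ⧸ Ideal.span {N}))
        ({h | ∃ t : Fin M, h = Pi.single t
            (MvPolynomial.C (Ideal.Quotient.mk (Ideal.span {N})
              (∏ s, p s ^ (nn s - α t s))))} ∪
         {h | ∃ i j : Fin M, i < j ∧ kk i = kk j ∧ h = rr i j}) :=
  syzygies_of_terms_quotient_PID_general N p hirr hassoc nn hfact c v α hα hcv u kk f hf rr hrr w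
end
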